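/- For every well-formed in-place state s (N even, N ≥ 2, ℓ ≥ Nat.clog 2 N, all entries of A and initv strictly less than 2^ℓ) with 2·b < N, the operation extend() produces a state s' with stack pointer b + 1 that is again well-formed, satisfies Zabs s' = Zabs s, and returns a block index k such that k < b + 1, block B_k is unchained in s', and A'[2k] = A'[2k+1] = initv (hence Zabs s' at positions 2k and 2k+1 equals initv). (In words: extending the written area by one block preserves the abstract array contents and yields a freshly initialized, unchained block inside the written area.) -/

import Mathlib

/-- A state of the in-place initializable-array algorithm: the single backing array `A`
of length `N`, a stack pointer `b`, and an initial value `initv`. -/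
structure IPState (N : ℕ) where
  A : Fin N → ℕ
  b : ℕ
  initv : ℕ

namespace IPState

variable {N : ℕ}

/-- Read the backing array at a natural-number position (out-of-range reads return `0`;
all positions actually used by the algorithm are in range). -/
def get (s : IPState N) (x : ℕ) : ℕ :=
  if h : x < N then s.A ⟨x, h⟩ else 0

/-- Write value `v` at natural-number position `x` of the backing array. -/
def set (s : IPState N) (x v : ℕ) : IPState N :=
  { s with A := fun y => if (y : ℕ) = x then v else s.A y }

/-- `chainWith s i` returns `some k` if block `B_i` is chained with block `B_k`
(i.e. `A[2i] = 2k`, `A[2k] = 2i`, the two blocks lie on opposite sides of the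
stack pointer `b`, and both block indices are valid), and `none` otherwise. -/
def chainWith (s : IPState N) (i : ℕ) : Option ℕ :=
  let k' := s.get (2 * i)
  let k := k' / 2
  if k' % 2 = 0 ∧ s.get k' = 2 * i ∧
      (i < s.b ∧ s.b ≤ k ∨ k < s.b ∧ s.b ≤ i) ∧
      2 * i + 1 < N ∧ 2 * k + 1 < N then
    some k
  else
    none

/-- `makeChain s i j` chains block `B_i` with block `B_j`: `A[2i] ← 2j`, `A[2j] ← 2i`. -/
def makeChain (s : IPState N) (i j : ℕ) : IPState N :=
  (s.set (2 * i) (2 * j)).set (2 * j) (2 * i)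

/-- `breakChain s i` breaks the chain of block `B_i` (if any) by rewriting `A[2k] ← 2k`
for the partner block `B_k`. -/
def breakChain (s : IPState N) (i : ℕ) : IPState N :=
  match s.chainWith i with
  | some k => s.set (2 * k) (2 * k)
  | none => s

/-- `initBlock s i` initializes block `B_i` with the initial value:
`A[2i] ← initv`, `A[2i+1] ← initv`. -/
def initBlock (s : IPState N) (i : ℕ) : IPState N :=
  (s.set (2 * i) s.initv).set (2 * i + 1) s.initv

/-- `extend` extends the written area by one block and returns (the new state and the
index of) a block initialized with `(initv, initv)` lying in the written area. -/
def extend (s : IPState N) : IPState N × ℕ :=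
  match s.chainWith s.b with
  | none =>
      let s1 : IPState N := { s with b := s.b + 1 }
      ((s1.initBlock s.b).breakChain s.b, s.b)
  | some k =>
      let s1 : IPState N := { s with b := s.b + 1 }
      -- overwrite block `B_{b-1}` with its abstract values, keeping `A[2(b-1)+1]`
      let s2 := s1.set (2 * s.b) (s1.get (2 * k + 1))
      let s3 := s2.breakChain s.b
      ((s3.initBlock k).breakChain k, k)

/-- The abstraction: the contents of the abstract initializable array represented by
the in-place state. -/
def Zabs (s : IPState N) (x : Fin N) : ℕ :=
  let i := (x : ℕ) / 2
  match s.chainWith i with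
  | some k =>
      if i < s.b then s.initv
      else if (x : ℕ) % 2 = 0 then s.get (2 * k + 1) else s.A x
  | none =>
      if i < s.b then s.A x else s.initv

/-- Step (W): write `v` at position `i` and break any accidental chain of its block. -/
def wstep (s : IPState N) (i : Fin N) (v : ℕ) : IPState N :=
  (s.set (i : ℕ) v).breakChain ((i : ℕ) / 2)

/-- Step (U): for a position `i` in a block chained with `B_k` in the unwritten area,
write `v` at the corresponding stored position. -/
def ustep (s : IPState N) (i : Fin N) (v k : ℕ) : IPState N :=
  if (i : ℕ) % 2 = 0 then s.set (2 * k + 1) v else s.set (i : ℕ) v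

/-- The write operation of the in-place algorithm (Algorithm 3). -/
def iwrite (s : IPState N) (i : Fin N) (v : ℕ) : IPState N :=
  let i' := (i : ℕ) / 2
  if i' < s.b then
    match s.chainWith i' with
    | none => s.wstep i v
    | some k =>
        let p := s.extend
        let s1 := p.1
        let j := p.2
        if j = i' then s1.wstep i v
        else
          -- exchange `B_{i'}` with `B_j`
          let s2 := (s1.set (2 * j) (s1.get (2 * i'))).set (2 * j + 1) (s1.get (2 * i' + 1))
          let s3 := s2.makeChain j k
          let s4 := s3.initBlock i'
          s4.wstep i v
  else
    match s.chainWith i' with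
    | some k => s.ustep i v k
    | none =>
        let p := s.extend
        let s1 := p.1
        let k := p.2
        if k = i' then s1.wstep i v
        else
          let s2 := s1.initBlock i'
          let s3 := s2.makeChain k i'
          s3.ustep i v k

/-- The read operation of the in-place algorithm (Algorithm 2). -/
def iread (s : IPState N) (i : Fin N) : ℕ :=
  let i' := (i : ℕ) / 2
  if (i : ℕ) < 2 * s.b then
    match s.chainWith i' with
    | some _ => s.initv
    | none => s.A i
  else
    match s.chainWith i' with
    | some _ => if (i : ℕ) % 2 = 0 then s.get (s.A i + 1) else s.A i
    | none => s.initv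

/-- The init operation of the in-place algorithm: set `b ← 0` and `initv ← v`,
leaving `A` unchanged. -/
def iinit (s : IPState N) (v : ℕ) : IPState N :=
  { s with b := 0, initv := v }

/-- Well-formedness of an in-place state with element size `ℓ`: all entries of `A`
and the initial value are `ℓ`-bit values, and the written area fits in the array. -/
def WF (ℓ : ℕ) (s : IPState N) : Prop :=
  (∀ x : Fin N, s.A x < 2 ^ ℓ) ∧ s.initv < 2 ^ ℓ ∧ 2 * s.b ≤ N

end IPState

/-!
If `B_b` is unchained, `extend` hands out `B_b` itself. Otherwise `B_b` is chained with some `B_k`,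
`k < b`: `extend` stores the abstract contents of `B_b` in its own cells (its even value lives in
`A[2k+1]`) and hands out `B_k`, whose abstract contents are `initv`. Either way the touched blocks
end up unchained and holding their old abstract contents, while every other block keeps its cells
and its chain partner. The only other writes come from `breakChain`, which replaces an even cell
pointing into a touched block by its own index; such a block was already unchained, so it reads
`initv` before and after.
-/

namespace IPState

variable {N : ℕ} (s : IPState N)

@[simp] lemma set_b (y v : ℕ) : (s.set y v).b = s.b := rfl
@[simp] lemma set_initv (y v : ℕ) : (s.set y v).initv = s.initv := rfl
@[simp] lemma initBlock_b (i : ℕ) : (s.initBlock i).b = s.b := rfl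
@[simp] lemma initBlock_initv (i : ℕ) : (s.initBlock i).initv = s.initv := rfl

@[simp] lemma breakChain_b (i : ℕ) : (s.breakChain i).b = s.b := by
  unfold breakChain; split <;> rfl

@[simp] lemma breakChain_initv (i : ℕ) : (s.breakChain i).initv = s.initv := by
  unfold breakChain; split <;> rfl

lemma get_coe (x : Fin N) : s.get x = s.A x := dif_pos x.isLt

lemma get_set (x v y : ℕ) : (s.set x v).get y = if y = x ∧ y < N then v else s.get y := by
  unfold get set
  by_cases hy : y < N <;> by_cases hx : y = x <;> simp_all

lemma get_initBlock (i y : ℕ) :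
    (s.initBlock i).get y = if (y = 2 * i ∨ y = 2 * i + 1) ∧ y < N then s.initv else s.get y := by
  simp only [initBlock, get_set]
  split_ifs <;> first | rfl | omega

lemma chainWith_eq_some_iff (i j : ℕ) :
    s.chainWith i = some j ↔ s.get (2 * i) = 2 * j ∧ s.get (2 * j) = 2 * i ∧
      (i < s.b ∧ s.b ≤ j ∨ j < s.b ∧ s.b ≤ i) ∧ 2 * i + 1 < N ∧ 2 * j + 1 < N := by
  unfold chainWith
  dsimp only
  split_ifs with h
  · rw [Option.some.injEq]
    constructor
    · rintro rfl
      obtain ⟨h0, h1, h2, h3, h4⟩ := h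
      have hk : 2 * (s.get (2 * i) / 2) = s.get (2 * i) := by omega
      exact ⟨hk.symm, by rwa [hk], h2, h3, h4⟩
    · rintro ⟨hj, -⟩
      omega
  · refine ⟨nofun, fun ⟨hj, h1, h2, h3, h4⟩ => h ?_⟩
    have hk : s.get (2 * i) / 2 = j := by omega
    exact ⟨by omega, by rwa [hj], by rwa [hk], h3, by rwa [hk]⟩

variable {s}

lemma chainWith_symm {i j : ℕ} (h : s.chainWith i = some j) : s.chainWith j = some i := by
  obtain ⟨h1, h2, h3, h4, h5⟩ := (chainWith_eq_some_iff s i j).mp h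
  exact (chainWith_eq_some_iff s j i).mpr ⟨h2, h1, by omega, h5, h4⟩

lemma chainWith_congr {u : IPState N} {i : ℕ} (hb : u.b = s.b)
    (hi : u.get (2 * i) = s.get (2 * i))
    (hopp : ∀ j, i < s.b ∧ s.b ≤ j ∨ j < s.b ∧ s.b ≤ i → u.get (2 * j) = s.get (2 * j)) :
    u.chainWith i = s.chainWith i := by
  refine Option.ext fun j => ?_
  simp only [chainWith_eq_some_iff, hb, hi]
  constructor <;> rintro ⟨h1, h2, h3, h4, h5⟩
  · exact ⟨h1, by rwa [← hopp j h3], h3, h4, h5⟩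
  · exact ⟨h1, by rwa [hopp j h3], h3, h4, h5⟩

lemma get_breakChain_eq_or (s : IPState N) (i y : ℕ) :
    (s.breakChain i).get y = s.get y ∨
      y % 2 = 0 ∧ (i < s.b ∧ s.b ≤ y / 2 ∨ y / 2 < s.b ∧ s.b ≤ i) ∧
        s.get y = 2 * i ∧ (s.breakChain i).get y = y := by
  unfold breakChain
  split
  · next k hk =>
    obtain ⟨-, h2, h3, -, h5⟩ := (chainWith_eq_some_iff s i k).mp hk
    rw [get_set]
    by_cases hy : y = 2 * k
    · subst hy
      refine .inr ⟨by omega, by omega, h2, by simp; omega⟩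
    · exact .inl (if_neg fun h => hy h.1)
  · exact .inl rfl

lemma get_breakChain_of_not_opposite (s : IPState N) {i y : ℕ}
    (hy : y % 2 = 1 ∨ ¬ (i < s.b ∧ s.b ≤ y / 2 ∨ y / 2 < s.b ∧ s.b ≤ i)) :
    (s.breakChain i).get y = s.get y :=
  (get_breakChain_eq_or s i y).resolve_right (by omega)

lemma chainWith_breakChain_self (i : ℕ) : (s.breakChain i).chainWith i = none := by
  unfold breakChain
  split
  · next k hk =>
    obtain ⟨h1, -, h3, -, h5⟩ := (chainWith_eq_some_iff s i k).mp hk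
    refine Option.eq_none_iff_forall_ne_some.mpr fun j hj => ?_
    obtain ⟨e1, e2, -⟩ := ((s.set (2 * k) (2 * k)).chainWith_eq_some_iff i j).mp hj
    rw [get_set, if_neg (by omega), h1] at e1
    obtain rfl : j = k := by omega
    rw [get_set, if_pos ⟨rfl, h5.trans' (by omega)⟩] at e2
    omega
  · assumption

lemma chainWith_breakChain {i j : ℕ} (hij : i ≠ j) (hji : s.chainWith j ≠ some i) :
    (s.breakChain j).chainWith i = s.chainWith i := by
  unfold breakChain
  split
  · next m hm =>
    obtain ⟨-, h2, -⟩ := (chainWith_eq_some_iff s j m).mp hm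
    have hmi : m ≠ i := fun h => hji (h ▸ hm)
    refine Option.ext fun j' => ?_
    simp only [chainWith_eq_some_iff, get_set, set_b]
    by_cases hj' : j' = m
    · subst hj'
      split_ifs <;> omega
    · rw [if_neg (by omega), if_neg (by omega)]
  · rfl

lemma chainWith_breakChain_initBlock_of_eq_none {i k : ℕ} (h : s.chainWith i = none)
    (hik : i ≠ k) (hside : i < s.b ↔ k < s.b) :
    ((s.initBlock k).breakChain k).chainWith i = none := by
  have hb : (s.initBlock k).b = s.b := rfl
  have hki : (s.initBlock k).chainWith k ≠ some i := fun e => by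
    have := ((chainWith_eq_some_iff _ k i).mp e).2.2.1
    omega
  have hget : ∀ j, j ≠ k → (s.initBlock k).get (2 * j) = s.get (2 * j) := fun j hj => by
    rw [get_initBlock, if_neg (by omega)]
  rw [chainWith_breakChain hik hki,
    chainWith_congr hb (hget i hik) fun j hj => hget j (by omega)]
  exact h

lemma Zabs_of_chainWith_eq_none {x : Fin N} (h : s.chainWith (x / 2) = none) :
    s.Zabs x = if x / 2 < s.b then s.get x else s.initv := by
  simp only [Zabs, h, get_coe]

lemma Zabs_of_chainWith_eq_some {x : Fin N} {j : ℕ} (h : s.chainWith (x / 2) = some j) :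
    s.Zabs x = if x / 2 < s.b then s.initv
      else if (x : ℕ) % 2 = 0 then s.get (2 * j + 1) else s.get x := by
  simp only [Zabs, h, get_coe]

/-- `u` advances the stack pointer past block `s.b` and turns every block of `T` (a set closed
under chain partners in `s`) into an unchained written block holding its abstract contents. Every
other block keeps its cells, except that an even cell pointing into `T` may have been overwritten
with its own index, which breaks a stale chain. -/
structure IsExtension (s u : IPState N) (T : ℕ → Prop) : Prop where
  b_eq : u.b = s.b + 1
  initv_eq : u.initv = s.initv
  touched_b : T s.b
  touched_le : ∀ t, T t → t ≤ s.b
  chainWith_touched : ∀ t, T t → u.chainWith t = none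
  partner_touched : ∀ t j, T t → s.chainWith t = some j → T j
  A_touched : ∀ x : Fin N, T (x / 2) → u.A x = s.Zabs x
  get_odd : ∀ i, ¬ T i → u.get (2 * i + 1) = s.get (2 * i + 1)
  get_even : ∀ i, ¬ T i → u.get (2 * i) = s.get (2 * i) ∨
    s.b < i ∧ u.get (2 * i) = 2 * i ∧ ∃ t, T t ∧ s.get (2 * i) = 2 * t

namespace IsExtension

variable {u : IPState N} {T : ℕ → Prop} (h : IsExtension s u T)
include h

lemma untouched_partner {i j : ℕ} (hi : ¬ T i) (hj : s.chainWith i = some j) : ¬ T j :=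
  fun hTj => hi (h.partner_touched j i hTj (chainWith_symm hj))

lemma get_even_eq_iff {i j : ℕ} (hi : ¬ T i) (hj : ¬ T j) (hij : i ≠ j) :
    u.get (2 * i) = 2 * j ↔ s.get (2 * i) = 2 * j := by
  rcases h.get_even i hi with h' | ⟨-, h', t, ht, hst⟩
  · rw [h']
  · rw [h', hst]
    obtain rfl | htj := eq_or_ne t j
    · exact absurd ht hj
    · omega

lemma chainWith_eq {i : ℕ} (hi : ¬ T i) : u.chainWith i = s.chainWith i := by
  refine Option.ext fun j => ?_
  by_cases hj : T j
  · refine iff_of_false (fun hu => ?_) (fun hs => h.untouched_partner hi hs hj)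
    simpa [h.chainWith_touched j hj] using chainWith_symm hu
  have hib : i ≠ s.b := fun e => hi (e ▸ h.touched_b)
  have hjb : j ≠ s.b := fun e => hj (e ▸ h.touched_b)
  rw [chainWith_eq_some_iff, chainWith_eq_some_iff, h.b_eq]
  constructor <;> rintro ⟨e1, e2, e3, e4, e5⟩ <;> have hij : i ≠ j := (by omega)
  · exact ⟨(h.get_even_eq_iff hi hj hij).1 e1, (h.get_even_eq_iff hj hi hij.symm).1 e2,
      by omega, e4, e5⟩
  · exact ⟨(h.get_even_eq_iff hi hj hij).2 e1, (h.get_even_eq_iff hj hi hij.symm).2 e2,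
      by omega, e4, e5⟩

lemma Zabs_eq : u.Zabs = s.Zabs := by
  funext x
  by_cases hT : T (x / 2)
  · have := h.touched_le _ hT
    have := h.b_eq
    rw [Zabs_of_chainWith_eq_none (h.chainWith_touched _ hT), if_pos (by omega), get_coe,
      h.A_touched x hT]
  have hxb : (x : ℕ) / 2 ≠ s.b := fun e => hT (e ▸ h.touched_b)
  have hodd : (x : ℕ) % 2 = 1 → u.get x = s.get x := fun hx => by
    rw [show (x : ℕ) = 2 * (x / 2) + 1 by omega]
    exact h.get_odd _ hT
  rcases hs : s.chainWith (x / 2) with _ | j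
  · rw [Zabs_of_chainWith_eq_none ((h.chainWith_eq hT).trans hs), Zabs_of_chainWith_eq_none hs,
      h.b_eq, h.initv_eq]
    split_ifs <;> try omega
    rcases Nat.mod_two_eq_zero_or_one x with hx | hx
    · rcases h.get_even _ hT with h' | h'
      · rwa [show (x : ℕ) = 2 * (x / 2) by omega]
      · omega
    · exact hodd hx
  · rw [Zabs_of_chainWith_eq_some ((h.chainWith_eq hT).trans hs), Zabs_of_chainWith_eq_some hs,
      h.b_eq, h.initv_eq, h.get_odd j (h.untouched_partner hT hs)]
    split_ifs <;> first | rfl | omega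

end IsExtension

section WellFormed

variable {ℓ : ℕ}

lemma WF.get_lt (hs : s.WF ℓ) (y : ℕ) : s.get y < 2 ^ ℓ := by
  unfold get
  split
  · exact hs.1 _
  · exact Nat.two_pow_pos ℓ

lemma WF.set (hs : s.WF ℓ) {v : ℕ} (hv : v < 2 ^ ℓ) (y : ℕ) : (s.set y v).WF ℓ := by
  refine ⟨fun x => ?_, hs.2.1, hs.2.2⟩
  unfold IPState.set
  dsimp only
  split_ifs
  exacts [hv, hs.1 x]

lemma WF.initBlock (hs : s.WF ℓ) (i : ℕ) : (s.initBlock i).WF ℓ :=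
  (hs.set hs.2.1 _).set hs.2.1 _

lemma WF.breakChain (hs : s.WF ℓ) (hN : N ≤ 2 ^ ℓ) (i : ℕ) : (s.breakChain i).WF ℓ := by
  unfold IPState.breakChain
  split
  · next k hk =>
    have := ((chainWith_eq_some_iff s i k).mp hk).2.2.2.2
    exact hs.set (by omega) _
  · exact hs

lemma WF.extend (hs : s.WF ℓ) (hN : N ≤ 2 ^ ℓ) (hb : 2 * s.b + 1 < N) : s.extend.1.WF ℓ := by
  have hs1 : ({ s with b := s.b + 1 } : IPState N).WF ℓ := ⟨hs.1, hs.2.1, by dsimp only; omega⟩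
  unfold IPState.extend
  split
  · exact (hs1.initBlock _).breakChain hN _
  · exact (((hs1.set (hs1.get_lt _) _).breakChain hN _).initBlock _).breakChain hN _

end WellFormed

lemma isExtension_of_chainWith_eq_none (h : s.chainWith s.b = none) :
    IsExtension s ((({ s with b := s.b + 1 } : IPState N).initBlock s.b).breakChain s.b)
      (· = s.b) := by
  set s' := ({ s with b := s.b + 1 } : IPState N).initBlock s.b
  have hb' : s'.b = s.b + 1 := rfl
  have hget : ∀ y, y / 2 ≠ s.b → s'.get y = s.get y := fun y hy => by
    rw [get_initBlock, if_neg (by omega)]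
    rfl
  refine ⟨by simp [s'], by simp [s'], rfl, fun t ht => ht.le, ?_, ?_, ?_, ?_, ?_⟩
  · rintro t rfl
    exact chainWith_breakChain_self _
  · rintro t j rfl hj
    simp [h] at hj
  · intro x hx
    rw [← get_coe, Zabs_of_chainWith_eq_none (hx ▸ h), if_neg (by omega),
      get_breakChain_of_not_opposite _ (by omega), get_initBlock, if_pos ⟨by omega, x.isLt⟩]
  · intro i hi
    rw [get_breakChain_of_not_opposite _ (by omega), hget _ (by omega)]
  · intro i hi
    rcases get_breakChain_eq_or s' s.b (2 * i) with e | ⟨-, e1, e2, e3⟩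
    · exact .inl (e.trans (hget _ (by omega)))
    · refine .inr ⟨by omega, e3, s.b, rfl, ?_⟩
      rwa [← hget _ (by omega)]

lemma isExtension_of_chainWith_eq_some {k : ℕ} (h : s.chainWith s.b = some k) :
    IsExtension s ((((({ s with b := s.b + 1 } : IPState N).set (2 * s.b)
      (s.get (2 * k + 1))).breakChain s.b).initBlock k).breakChain k)
      (fun t => t = s.b ∨ t = k) := by
  obtain ⟨-, -, hside, -, hkN⟩ := (chainWith_eq_some_iff s s.b k).mp h
  set s2 := ({ s with b := s.b + 1 } : IPState N).set (2 * s.b) (s.get (2 * k + 1))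
  set s3 := s2.breakChain s.b
  set s4 := s3.initBlock k
  have hb2 : s2.b = s.b + 1 := rfl
  have hb3 : s3.b = s.b + 1 := by simp [s3, s2]
  have hb4 : s4.b = s.b + 1 := hb3
  have hinit3 : s3.initv = s.initv := by simp [s3, s2]
  have get2 : ∀ y, y ≠ 2 * s.b → s2.get y = s.get y := fun y hy => by
    rw [get_set, if_neg (by omega)]
    rfl
  have get4 : ∀ y, y / 2 ≠ k → s4.get y = s3.get y := fun y hy => by
    rw [get_initBlock, if_neg (by omega)]
  refine ⟨by simp [s4, s3, s2], by simp [s4, s3, s2], .inl rfl, fun t ht => by omega,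
    ?_, ?_, ?_, ?_, ?_⟩
  · rintro _ (rfl | rfl)
    · exact chainWith_breakChain_initBlock_of_eq_none (chainWith_breakChain_self _) (by omega)
        (by omega)
    · exact chainWith_breakChain_self _
  · rintro t j (rfl | rfl) hj
    · exact .inr (Option.some.inj (h.symm.trans hj)).symm
    · exact .inl (Option.some.inj ((chainWith_symm h).symm.trans hj)).symm
  · rintro x (hx | hx) <;> rw [← get_coe]
    · rw [Zabs_of_chainWith_eq_some (hx ▸ h), if_neg (by omega),
        get_breakChain_of_not_opposite _ (by omega), get4 _ (by omega),
        get_breakChain_of_not_opposite _ (by omega), get_set]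
      split_ifs <;> first | rfl | omega
    · rw [Zabs_of_chainWith_eq_some (hx ▸ chainWith_symm h), if_pos (by omega),
        get_breakChain_of_not_opposite _ (by omega), get_initBlock,
        if_pos ⟨by omega, x.isLt⟩, hinit3]
  · intro i hi
    rw [get_breakChain_of_not_opposite _ (by omega), get4 _ (by omega),
      get_breakChain_of_not_opposite _ (by omega), get2 _ (by omega)]
  · intro i hi
    rcases get_breakChain_eq_or s4 k (2 * i) with e | ⟨-, e1, e2, e3⟩ <;>
      rcases get_breakChain_eq_or s2 s.b (2 * i) with e' | ⟨-, e1', e2', e3'⟩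
    · exact .inl (by rw [e, get4 _ (by omega), e', get2 _ (by omega)])
    · refine .inr ⟨by omega, by rw [e, get4 _ (by omega), e3'], s.b, .inl rfl, ?_⟩
      rwa [← get2 _ (by omega)]
    · refine .inr ⟨by omega, e3, k, .inr rfl, ?_⟩
      rwa [get4 _ (by omega), e', get2 _ (by omega)] at e2
    · rw [get4 _ (by omega), e3'] at e2
      omega

lemma isExtension_extend : IsExtension s s.extend.1 (fun t => t = s.b ∨ t = s.extend.2) := by
  unfold IPState.extend
  split
  · next h => simpa using isExtension_of_chainWith_eq_none h
  · next h => exact isExtension_of_chainWith_eq_some h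

lemma get_breakChain_initBlock (s : IPState N) {i : ℕ} (hi : 2 * i + 1 < N) :
    ((s.initBlock i).breakChain i).get (2 * i) = s.initv ∧
      ((s.initBlock i).breakChain i).get (2 * i + 1) = s.initv := by
  constructor <;>
  · rw [get_breakChain_of_not_opposite _ (by omega), get_initBlock, if_pos ⟨by omega, by omega⟩]

lemma get_extend_snd (hb : 2 * s.b + 1 < N) :
    s.extend.1.get (2 * s.extend.2) = s.initv ∧
      s.extend.1.get (2 * s.extend.2 + 1) = s.initv := by
  unfold IPState.extend
  split
  · exact get_breakChain_initBlock _ hb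
  · next k h =>
    have hk := ((chainWith_eq_some_iff s s.b k).mp h).2.2.2.2
    simp [get_breakChain_initBlock _ hk]

end IPState

theorem inplace_extend_correct_general (N ℓ : ℕ) (hNeven : N % 2 = 0)
    (hℓ : Nat.clog 2 N ≤ ℓ) (s : IPState N) (hs : s.WF ℓ) (hb : 2 * s.b < N) :
    (s.extend.1).WF ℓ ∧ s.extend.1.b = s.b + 1 ∧ s.extend.1.Zabs = s.Zabs ∧
      s.extend.2 < s.b + 1 ∧
      s.extend.1.chainWith s.extend.2 = none ∧
      s.extend.1.get (2 * s.extend.2) = s.initv ∧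
      s.extend.1.get (2 * s.extend.2 + 1) = s.initv := by
  have hN : N ≤ 2 ^ ℓ := (Nat.clog_le_iff_le_pow one_lt_two).mp hℓ
  have hb' : 2 * s.b + 1 < N := by omega
  have hext := s.isExtension_extend
  exact ⟨hs.extend hN hb', hext.b_eq, hext.Zabs_eq,
    Nat.lt_succ_of_le (hext.touched_le _ (.inr rfl)),
    hext.chainWith_touched _ (.inr rfl), IPState.get_extend_snd hb'⟩

/-- Extending the written area by one block preserves well-formedness and the abstract
array contents, and yields a freshly initialized, unchained block inside the (new)
written area. -/
theorem inplace_extend_correct (N ℓ : ℕ) (hNeven : N % 2 = 0) (hN : 2 ≤ N)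
    (hℓ : Nat.clog 2 N ≤ ℓ) (s : IPState N) (hs : s.WF ℓ) (hb : 2 * s.b < N) :
    (s.extend.1).WF ℓ ∧ s.extend.1.b = s.b + 1 ∧ s.extend.1.Zabs = s.Zabs ∧
      s.extend.2 < s.b + 1 ∧
      s.extend.1.chainWith s.extend.2 = none ∧
      s.extend.1.get (2 * s.extend.2) = s.initv ∧
      s.extend.1.get (2 * s.extend.2 + 1) = s.initv :=
  inplace_extend_correct_general N ℓ hNeven hℓ s hs hb
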